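/- Let p be a homogeneous noncommutative polynomial of degree δd with grouped coefficient function P. Then p has a t-term (δ,d)-NC Waring decomposition if and only if p satisfies the δ-compatibility condition and the commutative collapse of φ(p), namely the polynomial ∑_{μ : Fin d → (Fin δ → Fin g)} P(μ) • ∏_{i : Fin d} Z_{μ(i)} ∈ MvPolynomial (Fin δ → Fin g) ℂ, admits a t-term Waring decomposition ∑_{s : Fin t} (∑_{β} A(s,β) • Z_β)^d into d-th powers of linear forms with A : Fin t → (Fin δ → Fin g) → ℂ. -/

import Mathlib

/-!
Expanding `(∑ β, A s β • x^β) ^ d` word by word, in the free algebra as well as in the polynomial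
ring, puts the coefficient `∑ s, ∏ k, A s (μ k)` in front of the block word `x^μ`. In the free
algebra the block words are distinct basis monomials, so a decomposition exists exactly when `P`
is this coefficient function, which is symmetric in the blocks. In the commutative collapse a
monomial only remembers the multiset of blocks, and its coefficient is the orbit size times the
common value of a symmetric coefficient function; since the orbit size is nonzero, a symmetric `P`
with a commutative decomposition is again that coefficient function.
-/

open scoped BigOperators

/-- The ordered noncommutative word `x_{β 0} x_{β 1} ⋯ x_{β (δ-1)}` in the free algebra. -/
noncomputable def ncWord {g δ : ℕ} (β : Fin δ → Fin g) : FreeAlgebra ℂ (Fin g) :=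
  (List.ofFn fun i => FreeAlgebra.ι ℂ (β i)).prod

/-- The ordered product `x^{μ 0} x^{μ 1} ⋯ x^{μ (d-1)}` of the `δ`-blocks of `μ`. -/
noncomputable def ncGWord {g d δ : ℕ} (μ : Fin d → Fin δ → Fin g) : FreeAlgebra ℂ (Fin g) :=
  (List.ofFn fun i => ncWord (μ i)).prod

open Finset

def IsPermInvariant {d : ℕ} {α β : Type*} (f : (Fin d → α) → β) : Prop :=
  ∀ (μ : Fin d → α) (π : Equiv.Perm (Fin d)), f (μ ∘ π) = f μ

/-- The coefficient of the word `μ` in `∑ s, (∑ i, a s i • w i) ^ d`. -/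
def powerSumCoeff {R ι κ : Type*} [CommSemiring R] [Fintype κ] {d : ℕ} (a : κ → ι → R)
    (μ : Fin d → ι) : R :=
  ∑ s, ∏ k, a s (μ k)

theorem isPermInvariant_powerSumCoeff {R ι κ : Type*} [CommSemiring R] [Fintype κ] {d : ℕ}
    (a : κ → ι → R) : IsPermInvariant (powerSumCoeff (d := d) a) := fun μ π =>
  sum_congr rfl fun s _ => Equiv.prod_comp π fun k => a s (μ k)

section Expansion

variable {R A ι κ : Type*} [CommSemiring R] [Semiring A] [Algebra R A] [Fintype ι] [Fintype κ]

theorem pow_sum_eq_sum_prod_ofFn (y : ι → A) (d : ℕ) :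
    (∑ i, y i) ^ d = ∑ μ : Fin d → ι, (List.ofFn fun k => y (μ k)).prod := by
  induction d with
  | zero => simp
  | succ d ih =>
    rw [pow_succ', ih, sum_mul_sum, ← (Fin.consEquiv fun _ => ι).sum_comp, Fintype.sum_prod_type]
    simp [List.ofFn_succ]

theorem List.prod_ofFn_smul {n : ℕ} (c : Fin n → R) (w : Fin n → A) :
    (List.ofFn fun k => c k • w k).prod = (∏ k, c k) • (List.ofFn w).prod := by
  induction n with
  | zero => simp
  | succ n ih =>
    rw [List.ofFn_succ, List.ofFn_succ (f := w), List.prod_cons, List.prod_cons,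
      ih (fun k => c k.succ) (fun k => w k.succ), Fin.prod_univ_succ,
      smul_mul_assoc, mul_smul_comm, smul_smul]

theorem sum_pow_sum_smul (a : κ → ι → R) (w : ι → A) (d : ℕ) :
    ∑ s, (∑ i, a s i • w i) ^ d
      = ∑ μ : Fin d → ι, powerSumCoeff a μ • (List.ofFn fun k => w (μ k)).prod := by
  simp_rw [pow_sum_eq_sum_prod_ofFn, List.prod_ofFn_smul, powerSumCoeff, sum_smul]
  exact sum_comm

end Expansion

theorem List.eq_of_flatten_eq_of_map_length_eq {α : Type*} :
    ∀ {L₁ L₂ : List (List α)}, L₁.map length = L₂.map length → L₁.flatten = L₂.flatten → L₁ = L₂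
  | [], [], _, _ => rfl
  | l₁ :: L₁, l₂ :: L₂, hlen, h => by
    simp only [map_cons, cons.injEq] at hlen
    obtain ⟨rfl, htail⟩ := List.append_inj h hlen.1
    rw [List.eq_of_flatten_eq_of_map_length_eq hlen.2 htail]

theorem FreeAlgebra.basisFreeMonoid_apply {R X : Type*} [CommSemiring R] (w : FreeMonoid X) :
    basisFreeMonoid R X w = FreeMonoid.lift (ι R) w := by
  simp [basisFreeMonoid, equivMonoidAlgebraFreeMonoid]

/-- The letters of `ncGWord μ`, read left to right. -/
def blockWord {g d δ : ℕ} (μ : Fin d → Fin δ → Fin g) : List (Fin g) :=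
  (List.ofFn fun k => List.ofFn (μ k)).flatten

theorem blockWord_injective {g d δ : ℕ} :
    Function.Injective (blockWord (g := g) (d := d) (δ := δ)) :=
  fun μ ν h => by
    have hblocks : (List.ofFn fun k => List.ofFn (μ k)) = List.ofFn fun k => List.ofFn (ν k) :=
      List.eq_of_flatten_eq_of_map_length_eq (by simp [List.map_ofFn, Function.comp_def]) h
    exact funext fun k => List.ofFn_injective (congrFun (List.ofFn_injective hblocks) k)

theorem ncGWord_eq_basisFreeMonoid {g d δ : ℕ} (μ : Fin d → Fin δ → Fin g) :
    ncGWord μ = FreeAlgebra.basisFreeMonoid ℂ (Fin g) (FreeMonoid.ofList (blockWord μ)) := by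
  simp [FreeAlgebra.basisFreeMonoid_apply, ncGWord, ncWord, blockWord, map_list_prod,
    List.map_ofFn, Function.comp_def, FreeMonoid.lift_apply]

theorem linearIndependent_ncGWord {g d δ : ℕ} :
    LinearIndependent ℂ (ncGWord (g := g) (d := d) (δ := δ)) := by
  rw [funext ncGWord_eq_basisFreeMonoid]
  exact (FreeAlgebra.basisFreeMonoid ℂ (Fin g)).linearIndependent.comp _
    (FreeMonoid.ofList.injective.comp blockWord_injective)

theorem eq_of_sum_smul_ncGWord_eq {g d δ : ℕ} {f h : (Fin d → Fin δ → Fin g) → ℂ}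
    (H : ∑ μ, f μ • ncGWord μ = ∑ μ, h μ • ncGWord μ) : f = h :=
  funext (Fintype.linearIndependent_iffₛ.mp linearIndependent_ncGWord f h H)

namespace MvPolynomial

variable {σ R : Type*} {d : ℕ}

noncomputable def tupleExponent (μ : Fin d → σ) : σ →₀ ℕ :=
  ∑ k, Finsupp.single (μ k) 1

theorem prod_X_eq_monomial_tupleExponent [CommSemiring R] (μ : Fin d → σ) :
    ∏ k, (X (μ k) : MvPolynomial σ R) = monomial (tupleExponent μ) 1 :=
  (monomial_sum_one _ _).symm

theorem tupleExponent_apply [DecidableEq σ] (μ : Fin d → σ) (a : σ) :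
    tupleExponent μ a = #{k | μ k = a} := by
  simp [tupleExponent, Finsupp.finsetSum_apply, Finsupp.single_apply]

theorem exists_perm_of_tupleExponent_eq {μ ν : Fin d → σ}
    (h : tupleExponent μ = tupleExponent ν) :
    ∃ π : Equiv.Perm (Fin d), μ = ν ∘ π := by
  classical
  have hfiber (a : σ) : Fintype.card {k // μ k = a} = Fintype.card {k // ν k = a} := by
    simpa only [Fintype.card_subtype, tupleExponent_apply] using DFunLike.congr_fun h a
  let e (a : σ) := Fintype.equivOfCardEq (hfiber a)
  refine ⟨Equiv.ofFiberEquiv e, ?_⟩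
  ext k
  exact (Equiv.ofFiberEquiv_map e k).symm

variable [Fintype σ] [DecidableEq σ] [CommSemiring R]

theorem coeff_tupleExponent_sum_smul_prod_X {f : (Fin d → σ) → R} (hf : IsPermInvariant f)
    (μ₀ : Fin d → σ) :
    coeff (tupleExponent μ₀) (∑ μ, f μ • ∏ k, (X (μ k) : MvPolynomial σ R))
      = #{μ : Fin d → σ | tupleExponent μ = tupleExponent μ₀} • f μ₀ := by
  classical
  simp only [prod_X_eq_monomial_tupleExponent, coeff_sum, coeff_smul, coeff_monomial, smul_eq_mul,
    mul_ite, mul_one, mul_zero, ← sum_filter]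
  rw [← sum_const]
  refine sum_congr rfl fun μ hμ => ?_
  obtain ⟨π, rfl⟩ := exists_perm_of_tupleExponent_eq (mem_filter.mp hμ).2
  exact hf μ₀ π

theorem eq_of_sum_smul_prod_X_eq [IsAddTorsionFree R] {f h : (Fin d → σ) → R}
    (hf : IsPermInvariant f) (hh : IsPermInvariant h)
    (H : ∑ μ, f μ • ∏ k, (X (μ k) : MvPolynomial σ R) = ∑ μ, h μ • ∏ k, X (μ k)) :
    f = h := by
  funext μ₀
  have hcoeff := congrArg (coeff (tupleExponent μ₀)) H
  rw [coeff_tupleExponent_sum_smul_prod_X hf, coeff_tupleExponent_sum_smul_prod_X hh] at hcoeff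
  refine nsmul_right_injective ?_ hcoeff
  exact (card_pos.mpr ⟨μ₀, by simp⟩).ne'

end MvPolynomial

theorem stmt12_general (g d δ t : ℕ)
    (P : (Fin d → (Fin δ → Fin g)) → ℂ) :
    (∃ A : Fin t → (Fin δ → Fin g) → ℂ,
        (∑ μ : Fin d → (Fin δ → Fin g), P μ • ncGWord μ)
          = ∑ s : Fin t, (∑ β : Fin δ → Fin g, A s β • ncWord β) ^ d)
      ↔ ((∀ (μ : Fin d → (Fin δ → Fin g)) (π : Equiv.Perm (Fin d)), P (μ ∘ π) = P μ)
          ∧ ∃ A : Fin t → (Fin δ → Fin g) → ℂ,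
            (∑ μ : Fin d → (Fin δ → Fin g), P μ • ∏ i : Fin d, MvPolynomial.X (μ i)
                : MvPolynomial (Fin δ → Fin g) ℂ)
              = ∑ s : Fin t, (∑ β : Fin δ → Fin g, A s β • MvPolynomial.X β) ^ d) := by
  -- `List.prod_ofFn` only fires in `MvPolynomial`; in the free algebra the product is `ncGWord μ`.
  simp only [sum_pow_sum_smul, List.prod_ofFn]
  constructor
  · rintro ⟨A, hA⟩
    obtain rfl : P = powerSumCoeff A := eq_of_sum_smul_ncGWord_eq hA
    exact ⟨isPermInvariant_powerSumCoeff A, A, rfl⟩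
  · rintro ⟨hP, A, hA⟩
    obtain rfl : P = powerSumCoeff A :=
      MvPolynomial.eq_of_sum_smul_prod_X_eq hP (isPermInvariant_powerSumCoeff A) hA
    exact ⟨A, rfl⟩

theorem stmt12 (g d δ t : ℕ) (hg : 1 ≤ g) (hd : 1 ≤ d) (hδ : 1 ≤ δ) (ht : 1 ≤ t)
    (P : (Fin d → (Fin δ → Fin g)) → ℂ) :
    (∃ A : Fin t → (Fin δ → Fin g) → ℂ,
        (∑ μ : Fin d → (Fin δ → Fin g), P μ • ncGWord μ)
          = ∑ s : Fin t, (∑ β : Fin δ → Fin g, A s β • ncWord β) ^ d)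
      ↔ ((∀ (μ : Fin d → (Fin δ → Fin g)) (π : Equiv.Perm (Fin d)), P (μ ∘ π) = P μ)
          ∧ ∃ A : Fin t → (Fin δ → Fin g) → ℂ,
            (∑ μ : Fin d → (Fin δ → Fin g), P μ • ∏ i : Fin d, MvPolynomial.X (μ i)
                : MvPolynomial (Fin δ → Fin g) ℂ)
              = ∑ s : Fin t, (∑ β : Fin δ → Fin g, A s β • MvPolynomial.X β) ^ d) :=
  stmt12_general g d δ t P
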